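/- For any G-system (X,d,G), mdim̄_M(G, X×X, d×d) = 2·mdim̄_M(G,X,d) and mdim̲_M(G, X×X, d×d) = 2·mdim̲_M(G,X,d), where X×X carries the diagonal G-action and the max product metric. -/

import Mathlib

open Filter Set Pointwise Topology MeasureTheory
open scoped symmDiff ENNReal NNReal

section Defs

variable {G : Type*} {X : Type*}

/-- The minimal cardinality of a `(ρ,ε)`-spanning set of `Z`:
a finite set `E` spans `Z` if every point of `Z` is within distance `ε` of `E`. -/
noncomputable def spanNum (Z : Set X) (ρ : X → X → ℝ) (ε : ℝ) : ℕ :=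
  sInf {n : ℕ | ∃ E : Finset X, E.card = n ∧ ∀ x ∈ Z, ∃ y ∈ E, ρ x y ≤ ε}

/-- The maximal cardinality of a `(ρ,ε)`-separated subset of `Z`:
distinct points are at distance `> ε`. -/
noncomputable def sepNum (Z : Set X) (ρ : X → X → ℝ) (ε : ℝ) : ℕ :=
  sSup {n : ℕ | ∃ S : Finset X, ↑S ⊆ Z ∧ S.card = n ∧
    ∀ x ∈ S, ∀ y ∈ S, x ≠ y → ε < ρ x y}

/-- The Bowen metric `ρ_F(x,y) = max_{g ∈ F} ρ(T_g x, T_g y)`. -/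
noncomputable def bowen (T : G → X → X) (ρ : X → X → ℝ) (F : Finset G) (x y : X) : ℝ :=
  sSup ((fun g => ρ (T g x) (T g y)) '' ↑F)

/-- The `ε`-topological entropy of `Z` along the sequence `Fn`,
`limsup_n (1/|F_n|) log s(Z, ρ_{F_n}, ε)`. -/
noncomputable def htopEps (T : G → X → X) (ρ : X → X → ℝ) (Fn : ℕ → Finset G)
    (Z : Set X) (ε : ℝ) : EReal :=
  limsup (fun n =>
    ((Real.log (sepNum Z (bowen T ρ (Fn n)) ε) / (Fn n).card : ℝ) : EReal)) atTop

/-- Upper metric mean dimension of `Z`. -/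
noncomputable def mdimUpper (T : G → X → X) (ρ : X → X → ℝ) (Fn : ℕ → Finset G)
    (Z : Set X) : EReal :=
  limsup (fun ε : ℝ => htopEps T ρ Fn Z ε / ((Real.log (1/ε) : ℝ) : EReal)) (𝓝[>] (0:ℝ))

/-- Lower metric mean dimension of `Z`. -/
noncomputable def mdimLower (T : G → X → X) (ρ : X → X → ℝ) (Fn : ℕ → Finset G)
    (Z : Set X) : EReal :=
  liminf (fun ε : ℝ => htopEps T ρ Fn Z ε / ((Real.log (1/ε) : ℝ) : EReal)) (𝓝[>] (0:ℝ))

/-- Upper box dimension of the "space" `(X,ρ)`. -/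
noncomputable def dimBUpper (ρ : X → X → ℝ) : EReal :=
  limsup (fun ε : ℝ =>
    ((Real.log (spanNum (univ : Set X) ρ ε) / Real.log (1/ε) : ℝ) : EReal)) (𝓝[>] (0:ℝ))

/-- Lower box dimension of the "space" `(X,ρ)`. -/
noncomputable def dimBLower (ρ : X → X → ℝ) : EReal :=
  liminf (fun ε : ℝ =>
    ((Real.log (spanNum (univ : Set X) ρ ε) / Real.log (1/ε) : ℝ) : EReal)) (𝓝[>] (0:ℝ))

variable [Group G] [DecidableEq G]

/-- A (left) Følner sequence of nonempty finite subsets of `G`. -/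
def IsFolner (Fn : ℕ → Finset G) : Prop :=
  (∀ n, (Fn n).Nonempty) ∧ ∀ g : G,
    Tendsto (fun n => ((((Fn n).image (g * ·)) ∆ (Fn n)).card : ℝ) / ((Fn n).card : ℝ))
      atTop (𝓝 0)

/-- A two-sided Følner sequence: also right-asymptotically invariant. -/
def IsTwoSidedFolner (Fn : ℕ → Finset G) : Prop :=
  IsFolner Fn ∧ ∀ g : G,
    Tendsto (fun n => ((((Fn n).image (· * g)) ∆ (Fn n)).card : ℝ) / ((Fn n).card : ℝ))
      atTop (𝓝 0)

/-- Shulman's temperedness condition on a Følner sequence. -/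
def IsTempered (Fn : ℕ → Finset G) : Prop :=
  ∃ C : ℝ, 0 < C ∧ ∀ n : ℕ,
    ((((Finset.range n).biUnion fun j => (Fn j)⁻¹ * Fn n).card : ℝ)) ≤ C * ((Fn n).card : ℝ)

end Defs

/-- The max product metric on `X × X`. -/
noncomputable def maxProdDist {X : Type*} [MetricSpace X] (p q : X × X) : ℝ :=
  max (dist p.1 q.1) (dist p.2 q.2)

section ERealAux
open Filter Set Topology

noncomputable def erealHalfIso : EReal ≃o EReal where
  toFun x := x / ((1/2 : ℝ) : EReal)
  invFun x := x * ((1/2 : ℝ) : EReal)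
  left_inv x := EReal.div_mul_cancel (by simp) (by simp) (by norm_num)
  right_inv x := by
    show x * ((1/2 : ℝ) : EReal) / ((1/2 : ℝ) : EReal) = x
    rw [mul_comm, ← EReal.mul_div, EReal.mul_div_cancel (by simp) (by simp) (by norm_num)]
  map_rel_iff' {a b} :=
    (EReal.strictMono_div_right_of_pos (by norm_num) (by simp)).le_iff_le

lemma erealHalfIso_apply (x : EReal) : erealHalfIso x = 2 * x := by
  show x / ((1/2 : ℝ) : EReal) = 2 * x
  rw [division_def, ← EReal.coe_inv, mul_comm]
  norm_num
  rfl

lemma ereal_limsup_two_mul {α : Type*} {l : Filter α} (f : α → EReal) :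
    limsup (fun x => (2:EReal) * f x) l = 2 * limsup f l := by
  simp_rw [← erealHalfIso_apply]
  exact (erealHalfIso.limsup_apply).symm

lemma ereal_liminf_two_mul {α : Type*} {l : Filter α} (f : α → EReal) :
    liminf (fun x => (2:EReal) * f x) l = 2 * liminf f l := by
  simp_rw [← erealHalfIso_apply]
  exact (erealHalfIso.liminf_apply).symm

lemma tendsto_logRatio :
    Tendsto (fun δ : ℝ => Real.log (1/δ) / Real.log (1/(2*δ))) (𝓝[>] (0:ℝ)) (𝓝 1) := by
  have ht : Tendsto (fun δ : ℝ => -Real.log δ) (𝓝[>] (0:ℝ)) atTop :=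
    tendsto_neg_atBot_atTop.comp Real.tendsto_log_nhdsGT_zero
  have hh : Tendsto (fun t : ℝ => t / (t - Real.log 2)) atTop (𝓝 1) := by
    have h1 : Tendsto (fun t : ℝ => t - Real.log 2) atTop atTop :=
      tendsto_atTop_add_const_right _ _ tendsto_id
    have h2 : Tendsto (fun t : ℝ => 1 + Real.log 2 * (t - Real.log 2)⁻¹) atTop (𝓝 1) := by
      have := (tendsto_inv_atTop_zero.comp h1).const_mul (Real.log 2)
      simpa using this.const_add 1
    apply h2.congr'
    filter_upwards [eventually_gt_atTop (Real.log 2)] with t htl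
    have hne : t - Real.log 2 ≠ 0 := sub_ne_zero.2 (ne_of_gt htl)
    field_simp
    ring
  have := hh.comp ht
  apply this.congr'
  filter_upwards [self_mem_nhdsWithin] with δ (hδ : 0 < δ)
  show (-Real.log δ) / (-Real.log δ - Real.log 2) = Real.log (1/δ) / Real.log (1/(2*δ))
  rw [one_div, one_div, Real.log_inv, Real.log_inv,
    Real.log_mul two_ne_zero (ne_of_gt hδ)]
  ring_nf

lemma ereal_limsup_nonneg {α : Type*} {l : Filter α} [l.NeBot] {f : α → EReal}
    (h : ∀ᶠ x in l, 0 ≤ f x) : 0 ≤ limsup f l :=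
  le_limsup_of_frequently_le h.frequently

lemma ereal_limsup_shift (f : ℝ → EReal) (hf : ∀ᶠ δ in 𝓝[>] (0:ℝ), 0 ≤ f δ) :
    limsup (fun δ => f δ / ((Real.log (1/(2*δ)) : ℝ) : EReal)) (𝓝[>] (0:ℝ))
      ≤ limsup (fun δ => f δ / ((Real.log (1/δ) : ℝ) : EReal)) (𝓝[>] (0:ℝ)) := by
  set A := limsup (fun δ => f δ / ((Real.log (1/δ) : ℝ) : EReal)) (𝓝[>] (0:ℝ)) with hA
  have claim : ∀ r : ℝ, A < (r : EReal) →
      limsup (fun δ => f δ / ((Real.log (1/(2*δ)) : ℝ) : EReal)) (𝓝[>] (0:ℝ)) ≤ (r : EReal) := by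
    intro r hAr
    have hev := eventually_lt_of_limsup_lt hAr
    have hg : Tendsto (fun δ : ℝ => ((r * (Real.log (1/δ) / Real.log (1/(2*δ)))) : ℝ))
        (𝓝[>] (0:ℝ)) (𝓝 r) := by
      simpa using tendsto_logRatio.const_mul r
    have hle : ∀ᶠ δ in 𝓝[>] (0:ℝ),
        f δ / ((Real.log (1/(2*δ)) : ℝ) : EReal)
          ≤ (((r * (Real.log (1/δ) / Real.log (1/(2*δ)))) : ℝ) : EReal) := by
      filter_upwards [hev, Ioo_mem_nhdsGT (by norm_num : (0:ℝ) < 1/2), hf]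
        with δ h1 h2 h3
      have hc : 0 < Real.log (1/δ) :=
        Real.log_pos (one_lt_one_div h2.1 (h2.2.trans (by norm_num)))
      have hc' : 0 < Real.log (1/(2*δ)) := by
        apply Real.log_pos
        rw [lt_div_iff₀ (by linarith [h2.1])]
        linarith [h2.2]
      have h4 : f δ ≤ ((Real.log (1/δ) : ℝ) : EReal) * (r : EReal) :=
        (EReal.div_le_iff_le_mul (by exact_mod_cast hc) (EReal.coe_ne_top _)).1 h1.le
      calc f δ / ((Real.log (1/(2*δ)) : ℝ) : EReal)
          ≤ (((Real.log (1/δ) : ℝ) : EReal) * (r : EReal)) / ((Real.log (1/(2*δ)) : ℝ) : EReal) :=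
            EReal.div_le_div_right_of_nonneg (by exact_mod_cast hc'.le) h4
        _ = (((r * (Real.log (1/δ) / Real.log (1/(2*δ)))) : ℝ) : EReal) := by
            rw [← EReal.coe_mul, ← EReal.coe_div]
            congr 1
            field_simp
    calc limsup (fun δ => f δ / ((Real.log (1/(2*δ)) : ℝ) : EReal)) (𝓝[>] (0:ℝ))
        ≤ limsup (fun δ : ℝ =>
            (((r * (Real.log (1/δ) / Real.log (1/(2*δ)))) : ℝ) : EReal)) (𝓝[>] (0:ℝ)) :=
          limsup_le_limsup hle
      _ = (r : EReal) := (EReal.tendsto_coe.2 hg).limsup_eq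
  by_contra hcon
  push_neg at hcon
  obtain ⟨r, hr1, hr2⟩ := EReal.exists_between_coe_real hcon
  exact absurd (claim r hr1) (not_le.2 hr2)

lemma ereal_liminf_shift (f : ℝ → EReal) (hf : ∀ᶠ δ in 𝓝[>] (0:ℝ), 0 ≤ f δ) :
    liminf (fun δ => f δ / ((Real.log (1/(2*δ)) : ℝ) : EReal)) (𝓝[>] (0:ℝ))
      ≤ liminf (fun δ => f δ / ((Real.log (1/δ) : ℝ) : EReal)) (𝓝[>] (0:ℝ)) := by
  set B := liminf (fun δ => f δ / ((Real.log (1/δ) : ℝ) : EReal)) (𝓝[>] (0:ℝ)) with hB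
  have claim : ∀ r s : ℝ, B < (r : EReal) → r < s →
      liminf (fun δ => f δ / ((Real.log (1/(2*δ)) : ℝ) : EReal)) (𝓝[>] (0:ℝ)) ≤ (s : EReal) := by
    intro r s hBr hrs
    have hfreq := frequently_lt_of_liminf_lt (h := hBr)
    have hg : Tendsto (fun δ : ℝ => ((r * (Real.log (1/δ) / Real.log (1/(2*δ)))) : ℝ))
        (𝓝[>] (0:ℝ)) (𝓝 r) := by
      simpa using tendsto_logRatio.const_mul r
    have hgs : ∀ᶠ δ in 𝓝[>] (0:ℝ),
        (r * (Real.log (1/δ) / Real.log (1/(2*δ))) : ℝ) < s := hg.eventually_lt_const hrs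
    have hE : ∀ᶠ δ in 𝓝[>] (0:ℝ),
        (f δ / ((Real.log (1/δ) : ℝ) : EReal) < (r : EReal)) →
          f δ / ((Real.log (1/(2*δ)) : ℝ) : EReal) ≤ (s : EReal) := by
      filter_upwards [Ioo_mem_nhdsGT (by norm_num : (0:ℝ) < 1/2), hf, hgs]
        with δ h2 h3 h5 h1
      have hc : 0 < Real.log (1/δ) :=
        Real.log_pos (one_lt_one_div h2.1 (h2.2.trans (by norm_num)))
      have hc' : 0 < Real.log (1/(2*δ)) := by
        apply Real.log_pos
        rw [lt_div_iff₀ (by linarith [h2.1])]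
        linarith [h2.2]
      have h4 : f δ ≤ ((Real.log (1/δ) : ℝ) : EReal) * (r : EReal) :=
        (EReal.div_le_iff_le_mul (by exact_mod_cast hc) (EReal.coe_ne_top _)).1 h1.le
      calc f δ / ((Real.log (1/(2*δ)) : ℝ) : EReal)
          ≤ (((Real.log (1/δ) : ℝ) : EReal) * (r : EReal)) / ((Real.log (1/(2*δ)) : ℝ) : EReal) :=
            EReal.div_le_div_right_of_nonneg (by exact_mod_cast hc'.le) h4
        _ = (((r * (Real.log (1/δ) / Real.log (1/(2*δ)))) : ℝ) : EReal) := by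
            rw [← EReal.coe_mul, ← EReal.coe_div]
            congr 1
            field_simp
        _ ≤ (s : EReal) := by exact_mod_cast h5.le
    exact liminf_le_of_frequently_le ((hfreq.and_eventually hE).mono fun δ hδ => hδ.2 hδ.1)
  by_contra hcon
  push_neg at hcon
  obtain ⟨r, hr1, hr2⟩ := EReal.exists_between_coe_real hcon
  obtain ⟨s, hs1, hs2⟩ := EReal.exists_between_coe_real hr2
  exact absurd (claim r s hr1 (by exact_mod_cast hs1)) (not_le.2 hs2)

lemma map_half : Filter.map (fun ε : ℝ => ε/2) (𝓝[>] (0:ℝ)) = 𝓝[>] (0:ℝ) := by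
  have h1 : Tendsto (fun ε : ℝ => ε/2) (𝓝[>] (0:ℝ)) (𝓝[>] (0:ℝ)) := by
    refine tendsto_nhdsWithin_of_tendsto_nhds_of_eventually_within _ ?_ ?_
    · have : Tendsto (fun ε : ℝ => ε/2) (𝓝 (0:ℝ)) (𝓝 ((0:ℝ)/2)) :=
        (continuous_id.div_const 2).tendsto 0
      simpa using this.mono_left nhdsWithin_le_nhds
    · filter_upwards [self_mem_nhdsWithin] with x (hx : 0 < x)
      exact div_pos hx two_pos
  have h2 : Tendsto (fun ε : ℝ => ε*2) (𝓝[>] (0:ℝ)) (𝓝[>] (0:ℝ)) := by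
    refine tendsto_nhdsWithin_of_tendsto_nhds_of_eventually_within _ ?_ ?_
    · have : Tendsto (fun ε : ℝ => ε*2) (𝓝 (0:ℝ)) (𝓝 ((0:ℝ)*2)) :=
        (continuous_mul_right (2:ℝ)).tendsto 0
      simpa using this.mono_left nhdsWithin_le_nhds
    · filter_upwards [self_mem_nhdsWithin] with x (hx : 0 < x)
      exact mul_pos hx two_pos
  refine le_antisymm h1 ?_
  have : 𝓝[>] (0:ℝ) = Filter.map (fun ε : ℝ => ε/2) (Filter.map (fun ε : ℝ => ε*2) (𝓝[>] (0:ℝ))) := by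
    rw [Filter.map_map]
    have : ((fun ε : ℝ => ε/2) ∘ (fun ε : ℝ => ε*2)) = id := by
      funext x; simp [Function.comp]
    rw [this, Filter.map_id]
  exact le_trans (le_of_eq this) (Filter.map_mono h2)

lemma limsup_comp' {α β γ : Type*} [ConditionallyCompleteLattice γ] (g : β → γ) (m : α → β)
    (l : Filter α) : limsup (fun x => g (m x)) l = limsup g (Filter.map m l) := by
  unfold Filter.limsup
  rw [Filter.map_map]
  rfl

lemma liminf_comp' {α β γ : Type*} [ConditionallyCompleteLattice γ] (g : β → γ) (m : α → β)
    (l : Filter α) : liminf (fun x => g (m x)) l = liminf g (Filter.map m l) := by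
  unfold Filter.liminf
  rw [Filter.map_map]
  rfl

lemma limsup_comp_half (g : ℝ → EReal) :
    Filter.limsup (fun ε : ℝ => g (ε/2)) (𝓝[>] (0:ℝ)) = Filter.limsup g (𝓝[>] (0:ℝ)) := by
  rw [limsup_comp' g (fun ε : ℝ => ε/2), map_half]

lemma liminf_comp_half (g : ℝ → EReal) :
    Filter.liminf (fun ε : ℝ => g (ε/2)) (𝓝[>] (0:ℝ)) = Filter.liminf g (𝓝[>] (0:ℝ)) := by
  rw [liminf_comp' g (fun ε : ℝ => ε/2), map_half]

end ERealAux
section Comb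
open Filter Set

variable {G : Type*} {Y : Type*}

lemma bowen_le {T : G → Y → Y} {ρ : Y → Y → ℝ} {F : Finset G} {x y : Y} {c : ℝ}
    (hc : 0 ≤ c) (h : ∀ g ∈ F, ρ (T g x) (T g y) ≤ c) : bowen T ρ F x y ≤ c := by
  apply Real.sSup_le _ hc
  rintro _ ⟨g, hg, rfl⟩
  exact h g (by exact_mod_cast hg)

lemma le_bowen {T : G → Y → Y} {ρ : Y → Y → ℝ} {F : Finset G} {x y : Y} {g : G}
    (hg : g ∈ F) : ρ (T g x) (T g y) ≤ bowen T ρ F x y :=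
  le_csSup (F.finite_toSet.image _).bddAbove ⟨g, by exact_mod_cast hg, rfl⟩

lemma bowen_nonneg {T : G → Y → Y} {ρ : Y → Y → ℝ} (hρ : ∀ a b, 0 ≤ ρ a b)
    (F : Finset G) (x y : Y) : 0 ≤ bowen T ρ F x y :=
  Real.sSup_nonneg (by rintro _ ⟨g, hg, rfl⟩; exact hρ _ _)

lemma bowen_self {T : G → Y → Y} {ρ : Y → Y → ℝ} (hρ : ∀ a, ρ a a = 0)
    (F : Finset G) (x : Y) : bowen T ρ F x x = 0 := by
  refine le_antisymm (bowen_le le_rfl fun g _ => le_of_eq (hρ _)) ?_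
  exact Real.sSup_nonneg (by rintro _ ⟨g, hg, rfl⟩; exact le_of_eq (hρ _).symm)

lemma bowen_symm {T : G → Y → Y} {ρ : Y → Y → ℝ} (hρ : ∀ a b, ρ a b = ρ b a)
    (F : Finset G) (x y : Y) : bowen T ρ F x y = bowen T ρ F y x := by
  unfold bowen
  congr 1
  ext r
  constructor <;> (rintro ⟨g, hg, rfl⟩; exact ⟨g, hg, (hρ _ _).symm⟩)

lemma bowen_triangle {T : G → Y → Y} {ρ : Y → Y → ℝ} (hρ : ∀ a b, 0 ≤ ρ a b)
    (htri : ∀ a b c, ρ a c ≤ ρ a b + ρ b c) (F : Finset G) (x y z : Y) :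
    bowen T ρ F x z ≤ bowen T ρ F x y + bowen T ρ F y z := by
  apply Real.sSup_le _ (add_nonneg (bowen_nonneg hρ F x y) (bowen_nonneg hρ F y z))
  rintro _ ⟨g, hg, rfl⟩
  exact (htri _ (T g y) _).trans (add_le_add (le_bowen (by exact_mod_cast hg))
    (le_bowen (by exact_mod_cast hg)))

end Comb

section Metric
open Filter Set

variable {X : Type*} [MetricSpace X]

lemma maxProdDist_nonneg (p q : X × X) : 0 ≤ maxProdDist p q :=
  le_trans dist_nonneg (le_max_left _ _)

lemma maxProdDist_self (p : X × X) : maxProdDist p p = 0 := by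
  simp [maxProdDist]

lemma maxProdDist_comm (p q : X × X) : maxProdDist p q = maxProdDist q p := by
  simp [maxProdDist, dist_comm]

lemma maxProdDist_triangle (p q r : X × X) :
    maxProdDist p r ≤ maxProdDist p q + maxProdDist q r := by
  simp only [maxProdDist]
  apply max_le
  · exact (dist_triangle _ q.1 _).trans
      (add_le_add (le_max_left _ _) (le_max_left _ _))
  · exact (dist_triangle _ q.2 _).trans
      (add_le_add (le_max_right _ _) (le_max_right _ _))

variable {G : Type*}

/-- The Bowen metric of the product system is the max of the Bowen metrics. -/
lemma bowen_prod (T : G → X → X) (F : Finset G) (p q : X × X) :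
    bowen (fun g r => (T g r.1, T g r.2)) maxProdDist F p q
      = max (bowen T dist F p.1 q.1) (bowen T dist F p.2 q.2) := by
  rcases F.eq_empty_or_nonempty with rfl | hF
  · simp [bowen, Real.sSup_empty]
  · refine le_antisymm ?_ ?_
    · refine bowen_le (le_trans (bowen_nonneg (fun _ _ => dist_nonneg) F p.1 q.1)
        (le_max_left _ _)) fun g hg => ?_
      exact max_le_max (le_bowen hg) (le_bowen hg)
    · refine max_le (Real.sSup_le ?_ ?_) (Real.sSup_le ?_ ?_)
      · rintro _ ⟨g, hg, rfl⟩
        exact le_trans (le_max_left _ (dist (T g p.2) (T g q.2)))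
          (le_bowen (ρ := maxProdDist) (T := fun g r => (T g r.1, T g r.2))
            (by exact_mod_cast hg))
      · exact bowen_nonneg (fun _ _ => maxProdDist_nonneg _ _) F p q
      · rintro _ ⟨g, hg, rfl⟩
        exact le_trans (le_max_right (dist (T g p.1) (T g q.1)) _)
          (le_bowen (ρ := maxProdDist) (T := fun g r => (T g r.1, T g r.2))
            (by exact_mod_cast hg))
      · exact bowen_nonneg (fun _ _ => maxProdDist_nonneg _ _) F p q

/-- Existence of a finite spanning set for a Bowen metric on a compact space. -/
lemma exists_bowen_span [CompactSpace X] (T : G → X → X) (hT : ∀ g, Continuous (T g))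
    (F : Finset G) {ε : ℝ} (hε : 0 < ε) :
    ∃ E : Finset X, ∀ x : X, ∃ e ∈ E, bowen T dist F x e ≤ ε := by
  classical
  have step1 : ∃ δ : ℝ, 0 < δ ∧ ∀ x y : X, dist x y < δ → ∀ g ∈ F, dist (T g x) (T g y) ≤ ε := by
    induction F using Finset.induction_on with
    | empty => exact ⟨1, one_pos, fun x y _ g hg => absurd hg (Finset.notMem_empty g)⟩
    | @insert a s ha ih =>
      obtain ⟨δ₁, hδ₁, h₁⟩ := ih
      obtain ⟨δ₂, hδ₂, h₂⟩ := Metric.uniformContinuous_iff.1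
        (CompactSpace.uniformContinuous_of_continuous (hT a)) ε hε
      refine ⟨min δ₁ δ₂, lt_min hδ₁ hδ₂, fun x y hxy g hg => ?_⟩
      rcases Finset.mem_insert.1 hg with rfl | hgs
      · exact (h₂ (hxy.trans_le (min_le_right _ _))).le
      · exact h₁ x y (hxy.trans_le (min_le_left _ _)) g hgs
  obtain ⟨δ, hδ, hδ'⟩ := step1
  obtain ⟨t, -, htfin, htcov⟩ := finite_cover_balls_of_compact (isCompact_univ (X := X)) hδ
  refine ⟨htfin.toFinset, fun x => ?_⟩
  obtain ⟨e, het, hxe⟩ := Set.mem_iUnion₂.1 (htcov (Set.mem_univ x))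
  exact ⟨e, htfin.mem_toFinset.2 het,
    bowen_le hε.le fun g hg => hδ' x e (Metric.mem_ball.1 hxe) g hg⟩

end Metric
section Count
open Filter Set

lemma sep_card_le_span {Y : Type*} {ρ : Y → Y → ℝ} {ε : ℝ}
    (hsym : ∀ a b, ρ a b = ρ b a) (htri : ∀ a b c, ρ a c ≤ ρ a b + ρ b c)
    {S E : Finset Y} (hS : ∀ x ∈ S, ∀ y ∈ S, x ≠ y → ε < ρ x y)
    (hE : ∀ x : Y, ∃ e ∈ E, ρ x e ≤ ε/2) : S.card ≤ E.card := by
  classical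
  choose f hfE hfd using hE
  refine Finset.card_le_card_of_injOn f (fun a _ => hfE a) ?_
  intro a ha b hb hab
  by_contra hne
  have hle : ρ a b ≤ ε := by
    calc ρ a b ≤ ρ a (f a) + ρ (f a) b := htri _ _ _
      _ = ρ a (f a) + ρ b (f b) := by rw [hsym (f a) b, hab]
      _ ≤ ε/2 + ε/2 := add_le_add (hfd a) (hfd b)
      _ = ε := by ring
  exact absurd (hS a (by exact_mod_cast ha) b (by exact_mod_cast hb) hne) (not_lt.2 hle)

lemma prod_sep_card_le {Y : Type*} {ρ : Y → Y → ℝ} {ε : ℝ}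
    (hsym : ∀ a b, ρ a b = ρ b a) (htri : ∀ a b c, ρ a c ≤ ρ a b + ρ b c)
    {S : Finset (Y × Y)} {E : Finset Y}
    (hS : ∀ p ∈ S, ∀ q ∈ S, p ≠ q → ε < max (ρ p.1 q.1) (ρ p.2 q.2))
    (hE : ∀ x : Y, ∃ e ∈ E, ρ x e ≤ ε/2) : S.card ≤ E.card ^ 2 := by
  classical
  choose f hfE hfd using hE
  have h : S.card ≤ (E ×ˢ E).card := by
    refine Finset.card_le_card_of_injOn (fun p => (f p.1, f p.2))
      (fun p _ => Finset.mem_product.2 ⟨hfE _, hfE _⟩) ?_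
    intro p hp q hq hpq
    by_contra hne
    have h1 : f p.1 = f q.1 := congrArg Prod.fst hpq
    have h2 : f p.2 = f q.2 := congrArg Prod.snd hpq
    have c1 : ρ p.1 q.1 ≤ ε := by
      calc ρ p.1 q.1 ≤ ρ p.1 (f p.1) + ρ (f p.1) q.1 := htri _ _ _
        _ = ρ p.1 (f p.1) + ρ q.1 (f q.1) := by rw [hsym (f p.1) q.1, h1]
        _ ≤ ε/2 + ε/2 := add_le_add (hfd _) (hfd _)
        _ = ε := by ring
    have c2 : ρ p.2 q.2 ≤ ε := by
      calc ρ p.2 q.2 ≤ ρ p.2 (f p.2) + ρ (f p.2) q.2 := htri _ _ _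
        _ = ρ p.2 (f p.2) + ρ q.2 (f q.2) := by rw [hsym (f p.2) q.2, h2]
        _ ≤ ε/2 + ε/2 := add_le_add (hfd _) (hfd _)
        _ = ε := by ring
    exact absurd (hS p (by exact_mod_cast hp) q (by exact_mod_cast hq) hne)
      (not_lt.2 (max_le c1 c2))
  simpa [Finset.card_product, sq] using h

variable {G : Type*} {X : Type*} [MetricSpace X] [CompactSpace X]

lemma bowen_dist_symm (T : G → X → X) (F : Finset G) (x y : X) :
    bowen T dist F x y = bowen T dist F y x :=
  bowen_symm (fun a b => dist_comm a b) F x y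

lemma bowen_dist_triangle (T : G → X → X) (F : Finset G) (x y z : X) :
    bowen T dist F x z ≤ bowen T dist F x y + bowen T dist F y z :=
  bowen_triangle (fun a b => dist_nonneg) (fun a b c => dist_triangle a b c) F x y z

lemma bddAbove_sepSet (T : G → X → X) (hT : ∀ g, Continuous (T g)) (F : Finset G)
    {ε : ℝ} (hε : 0 < ε) :
    BddAbove {n | ∃ S : Finset X, ↑S ⊆ (univ : Set X) ∧ S.card = n ∧
      ∀ x ∈ S, ∀ y ∈ S, x ≠ y → ε < bowen T dist F x y} := by
  obtain ⟨E, hE⟩ := exists_bowen_span T hT F (half_pos hε)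
  refine ⟨E.card, ?_⟩
  rintro n ⟨S, -, rfl, hsep⟩
  exact sep_card_le_span (bowen_dist_symm T F) (bowen_dist_triangle T F) hsep hE

lemma zero_mem_sepSet (T : G → X → X) (F : Finset G) (ε : ℝ) :
    0 ∈ {n | ∃ S : Finset X, ↑S ⊆ (univ : Set X) ∧ S.card = n ∧
      ∀ x ∈ S, ∀ y ∈ S, x ≠ y → ε < bowen T dist F x y} :=
  ⟨∅, by simp⟩

lemma exists_max_sep (T : G → X → X) (hT : ∀ g, Continuous (T g)) (F : Finset G)
    {ε : ℝ} (hε : 0 < ε) :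
    ∃ S : Finset X, S.card = sepNum (univ : Set X) (bowen T dist F) ε ∧
      (∀ x ∈ S, ∀ y ∈ S, x ≠ y → ε < bowen T dist F x y) ∧
      (∀ x : X, ∃ y ∈ S, bowen T dist F x y ≤ ε) := by
  classical
  have hbdd := bddAbove_sepSet T hT F hε
  obtain ⟨S, hSsub, hScard, hSsep⟩ :=
    Nat.sSup_mem ⟨0, zero_mem_sepSet T F ε⟩ hbdd
  refine ⟨S, hScard, hSsep, fun x => ?_⟩
  by_contra hx
  push_neg at hx
  have hxS : x ∉ S := fun hxS =>
    absurd (hx x hxS) (not_lt.2 (le_of_eq (bowen_self (fun a => dist_self a) F x) |>.trans hε.le))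
  have hmem : (insert x S).card ∈ {n | ∃ S : Finset X, ↑S ⊆ (univ : Set X) ∧ S.card = n ∧
      ∀ a ∈ S, ∀ b ∈ S, a ≠ b → ε < bowen T dist F a b} := by
    refine ⟨insert x S, subset_univ _, rfl, ?_⟩
    intro a ha b hb hab
    rcases Finset.mem_insert.1 ha with rfl | haS
    · rcases Finset.mem_insert.1 hb with rfl | hbS
      · exact absurd rfl hab
      · exact hx b hbS
    · rcases Finset.mem_insert.1 hb with rfl | hbS
      · exact (bowen_dist_symm T F a b) ▸ hx a haS
      · exact hSsep a haS b hbS hab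
  have hle : (insert x S).card ≤ sepNum (univ : Set X) (bowen T dist F) ε :=
    le_csSup hbdd hmem
  rw [Finset.card_insert_of_notMem hxS, hScard] at hle
  unfold sepNum at hle
  omega

lemma one_le_sepNum [Nonempty X] (T : G → X → X) (hT : ∀ g, Continuous (T g))
    (F : Finset G) {ε : ℝ} (hε : 0 < ε) :
    1 ≤ sepNum (univ : Set X) (bowen T dist F) ε := by
  obtain ⟨x⟩ := ‹Nonempty X›
  refine le_csSup (bddAbove_sepSet T hT F hε) ⟨{x}, by simp, Finset.card_singleton x, ?_⟩
  intro a ha b hb hab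
  rw [Finset.mem_singleton] at ha hb
  exact absurd (ha.trans hb.symm) hab

lemma spanNum_le_sepNum (T : G → X → X) (hT : ∀ g, Continuous (T g)) (F : Finset G)
    {ε : ℝ} (hε : 0 < ε) :
    spanNum (univ : Set X) (bowen T dist F) ε ≤ sepNum (univ : Set X) (bowen T dist F) ε := by
  obtain ⟨S, hScard, -, hSspan⟩ := exists_max_sep T hT F hε
  exact Nat.sInf_le ⟨S, hScard, fun x _ => hSspan x⟩

lemma exists_min_span (T : G → X → X) (hT : ∀ g, Continuous (T g)) (F : Finset G)
    {ε : ℝ} (hε : 0 < ε) :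
    ∃ E : Finset X, E.card = spanNum (univ : Set X) (bowen T dist F) ε ∧
      ∀ x : X, ∃ e ∈ E, bowen T dist F x e ≤ ε := by
  obtain ⟨E₀, hE₀⟩ := exists_bowen_span T hT F hε
  obtain ⟨E, hEcard, hEspan⟩ :=
    Nat.sInf_mem (s := {n | ∃ E : Finset X, E.card = n ∧
      ∀ x ∈ (univ : Set X), ∃ y ∈ E, bowen T dist F x y ≤ ε})
      ⟨E₀.card, E₀, rfl, fun x _ => hE₀ x⟩
  exact ⟨E, hEcard, fun x => hEspan x (mem_univ x)⟩

lemma bddAbove_sepSet_prod (T : G → X → X) (hT : ∀ g, Continuous (T g)) (F : Finset G)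
    {ε : ℝ} (hε : 0 < ε) :
    BddAbove {n | ∃ S : Finset (X × X), ↑S ⊆ (univ : Set (X × X)) ∧ S.card = n ∧
      ∀ p ∈ S, ∀ q ∈ S, p ≠ q →
        ε < bowen (fun g r => (T g r.1, T g r.2)) maxProdDist F p q} := by
  obtain ⟨E, hE⟩ := exists_bowen_span T hT F (half_pos hε)
  refine ⟨E.card ^ 2, ?_⟩
  rintro n ⟨S, -, rfl, hsep⟩
  refine prod_sep_card_le (bowen_dist_symm T F) (bowen_dist_triangle T F) ?_ hE
  intro p hp q hq hpq
  rw [← bowen_prod]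
  exact hsep p hp q hq hpq

lemma sq_le_sepNum_prod (T : G → X → X) (hT : ∀ g, Continuous (T g)) (F : Finset G)
    {ε : ℝ} (hε : 0 < ε) :
    sepNum (univ : Set X) (bowen T dist F) ε ^ 2 ≤
      sepNum (univ : Set (X × X)) (bowen (fun g r => (T g r.1, T g r.2)) maxProdDist F) ε := by
  classical
  obtain ⟨S, hScard, hSsep, -⟩ := exists_max_sep T hT F hε
  refine le_csSup (bddAbove_sepSet_prod T hT F hε) ⟨S ×ˢ S, subset_univ _, ?_, ?_⟩
  · rw [Finset.card_product, hScard, sq]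
  · intro p hp q hq hpq
    rw [bowen_prod]
    obtain ⟨hp1, hp2⟩ := Finset.mem_product.1 hp
    obtain ⟨hq1, hq2⟩ := Finset.mem_product.1 hq
    by_cases h1 : p.1 = q.1
    · have h2 : p.2 ≠ q.2 := fun h2 => hpq (Prod.ext h1 h2)
      exact lt_of_lt_of_le (hSsep _ hp2 _ hq2 h2) (le_max_right _ _)
    · exact lt_of_lt_of_le (hSsep _ hp1 _ hq1 h1) (le_max_left _ _)

lemma sepNum_prod_le (T : G → X → X) (hT : ∀ g, Continuous (T g)) (F : Finset G)
    {ε : ℝ} (hε : 0 < ε) :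
    sepNum (univ : Set (X × X)) (bowen (fun g r => (T g r.1, T g r.2)) maxProdDist F) ε ≤
      sepNum (univ : Set X) (bowen T dist F) (ε/2) ^ 2 := by
  obtain ⟨E, hEcard, hEspan⟩ := exists_min_span T hT F (half_pos hε)
  have h1 : sepNum (univ : Set (X × X))
      (bowen (fun g r => (T g r.1, T g r.2)) maxProdDist F) ε ≤ E.card ^ 2 := by
    refine csSup_le ⟨0, ∅, by simp⟩ ?_
    rintro n ⟨S, -, rfl, hsep⟩
    refine prod_sep_card_le (bowen_dist_symm T F) (bowen_dist_triangle T F) ?_ hEspan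
    intro p hp q hq hpq
    rw [← bowen_prod]
    exact hsep p hp q hq hpq
  refine h1.trans (Nat.pow_le_pow_left ?_ 2)
  rw [hEcard]
  exact spanNum_le_sepNum T hT F (half_pos hε)

end Count
section Main
open Filter Set Topology

lemma two_mul_coe (x : ℝ) : ((2*x : ℝ) : EReal) = (2:EReal) * (x:EReal) := by
  push_cast
  rfl

lemma htop_prod_bounds {G : Type*} {X : Type*} [MetricSpace X] [CompactSpace X] [Nonempty X]
    (T : G → X → X) (hT : ∀ g, Continuous (T g)) (Fn : ℕ → Finset G)
    (hFn : ∀ n, (Fn n).Nonempty) {ε : ℝ} (hε : 0 < ε) :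
    (2:EReal) * htopEps T dist Fn univ ε ≤
        htopEps (fun g r => (T g r.1, T g r.2)) maxProdDist Fn univ ε ∧
      htopEps (fun g r => (T g r.1, T g r.2)) maxProdDist Fn univ ε ≤
        (2:EReal) * htopEps T dist Fn univ (ε/2) := by
  have hcard : ∀ n, (0:ℝ) < ((Fn n).card : ℝ) := fun n => by
    exact_mod_cast Finset.card_pos.2 (hFn n)
  have key : ∀ n,
      2 * (Real.log (sepNum (univ : Set X) (bowen T dist (Fn n)) ε) / ((Fn n).card : ℝ))
        ≤ Real.log (sepNum (univ : Set (X × X))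
            (bowen (fun g r => (T g r.1, T g r.2)) maxProdDist (Fn n)) ε) / ((Fn n).card : ℝ)
      ∧ Real.log (sepNum (univ : Set (X × X))
            (bowen (fun g r => (T g r.1, T g r.2)) maxProdDist (Fn n)) ε) / ((Fn n).card : ℝ)
        ≤ 2 * (Real.log (sepNum (univ : Set X) (bowen T dist (Fn n)) (ε/2)) / ((Fn n).card : ℝ)) := by
    intro n
    set a := sepNum (univ : Set X) (bowen T dist (Fn n)) ε with ha
    set a' := sepNum (univ : Set X) (bowen T dist (Fn n)) (ε/2) with ha'
    set b := sepNum (univ : Set (X × X))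
      (bowen (fun g r => (T g r.1, T g r.2)) maxProdDist (Fn n)) ε with hb
    have ha1 : 1 ≤ a := one_le_sepNum T hT (Fn n) hε
    have ha'1 : 1 ≤ a' := one_le_sepNum T hT (Fn n) (half_pos hε)
    have hab : a^2 ≤ b := sq_le_sepNum_prod T hT (Fn n) hε
    have hba : b ≤ a'^2 := sepNum_prod_le T hT (Fn n) hε
    have hb1 : 1 ≤ b := le_trans (Nat.one_le_iff_ne_zero.2 (by positivity)) hab
    have h1 : 2 * Real.log a ≤ Real.log b := by
      have hcast : ((a:ℝ))^2 ≤ (b:ℝ) := by exact_mod_cast hab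
      have hpos : (0:ℝ) < ((a:ℝ))^2 := by positivity
      have := Real.log_le_log hpos hcast
      rwa [Real.log_pow, Nat.cast_ofNat] at this
    have h2 : Real.log b ≤ 2 * Real.log a' := by
      have hcast : (b:ℝ) ≤ ((a':ℝ))^2 := by exact_mod_cast hba
      have hpos : (0:ℝ) < (b:ℝ) := by exact_mod_cast hb1
      have := Real.log_le_log hpos hcast
      rwa [Real.log_pow, Nat.cast_ofNat] at this
    constructor
    · rw [mul_div_assoc']
      gcongr
    · rw [mul_div_assoc']
      gcongr
  constructor
  · rw [show (2:EReal) * htopEps T dist Fn univ ε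
        = limsup (fun n => (2:EReal) *
            ((Real.log (sepNum (univ : Set X) (bowen T dist (Fn n)) ε) / ((Fn n).card : ℝ) : ℝ)
              : EReal)) atTop from (ereal_limsup_two_mul _).symm]
    refine limsup_le_limsup (Eventually.of_forall fun n => ?_)
    beta_reduce
    rw [← two_mul_coe]
    exact_mod_cast (key n).1
  · rw [show (2:EReal) * htopEps T dist Fn univ (ε/2)
        = limsup (fun n => (2:EReal) *
            ((Real.log (sepNum (univ : Set X) (bowen T dist (Fn n)) (ε/2)) / ((Fn n).card : ℝ) : ℝ)
              : EReal)) atTop from (ereal_limsup_two_mul _).symm]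
    refine limsup_le_limsup (Eventually.of_forall fun n => ?_)
    beta_reduce
    rw [← two_mul_coe]
    exact_mod_cast (key n).2

lemma htop_nonneg {G : Type*} {X : Type*} [MetricSpace X] [CompactSpace X] [Nonempty X]
    (T : G → X → X) (hT : ∀ g, Continuous (T g)) (Fn : ℕ → Finset G)
    {ε : ℝ} (hε : 0 < ε) : 0 ≤ htopEps T dist Fn univ ε := by
  refine ereal_limsup_nonneg (Eventually.of_forall fun n => ?_)
  have h1 : 1 ≤ sepNum (univ : Set X) (bowen T dist (Fn n)) ε := one_le_sepNum T hT (Fn n) hε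
  have : (0:ℝ) ≤ Real.log (sepNum (univ : Set X) (bowen T dist (Fn n)) ε) / ((Fn n).card : ℝ) := by
    apply div_nonneg _ (Nat.cast_nonneg _)
    exact Real.log_nonneg (by exact_mod_cast h1)
  exact_mod_cast this

lemma mdim_of_isEmpty {G : Type*} {Y : Type*} [IsEmpty Y] (T : G → Y → Y) (ρ : Y → Y → ℝ)
    (Fn : ℕ → Finset G) :
    mdimUpper T ρ Fn univ = 0 ∧ mdimLower T ρ Fn univ = 0 := by
  have hsep : ∀ (F : Finset G) (ε : ℝ), sepNum (univ : Set Y) (bowen T ρ F) ε = 0 := by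
    intro F ε
    unfold sepNum
    have hset : {n | ∃ S : Finset Y, ↑S ⊆ (univ : Set Y) ∧ S.card = n ∧
        ∀ x ∈ S, ∀ y ∈ S, x ≠ y → ε < bowen T ρ F x y} = {0} := by
      ext n
      simp only [Set.mem_setOf_eq, Set.mem_singleton_iff]
      constructor
      · rintro ⟨S, -, rfl, -⟩
        simp [Finset.eq_empty_of_isEmpty S]
      · rintro rfl
        exact ⟨∅, by simp⟩
    rw [hset, csSup_singleton]
  have hhtop : ∀ ε, htopEps T ρ Fn univ ε = 0 := by
    intro ε
    unfold htopEps
    have heq : (fun n => ((Real.log (sepNum (univ : Set Y) (bowen T ρ (Fn n)) ε)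
        / ((Fn n).card : ℝ) : ℝ) : EReal)) = fun _ => (0:EReal) := by
      funext n
      rw [hsep]
      simp
    rw [heq]
    exact limsup_const 0
  constructor
  · unfold mdimUpper
    simp_rw [hhtop, EReal.zero_div]
    exact limsup_const 0
  · unfold mdimLower
    simp_rw [hhtop, EReal.zero_div]
    exact liminf_const 0

end Main
set_option maxHeartbeats 2000000 in
/-- for any `G`-system, the upper and lower metric mean dimensions of the
product of the system with itself (diagonal action, max metric) are twice those of the
system. -/
theorem mdim_self_prod {G : Type*} [Group G] [DecidableEq G] [Countable G]
    {X : Type*} [MetricSpace X] [CompactSpace X] [MulAction G X] [ContinuousConstSMul G X]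
    (Fn : ℕ → Finset G) (hFn : IsFolner Fn) :
    mdimUpper (fun (g : G) (p : X × X) => (g • p.1, g • p.2)) maxProdDist Fn
        (univ : Set (X × X)) =
      (2 : EReal) * mdimUpper (fun (g : G) (x : X) => g • x) dist Fn (univ : Set X) ∧
    mdimLower (fun (g : G) (p : X × X) => (g • p.1, g • p.2)) maxProdDist Fn
        (univ : Set (X × X)) =
      (2 : EReal) * mdimLower (fun (g : G) (x : X) => g • x) dist Fn (univ : Set X) := by
  classical
  rcases isEmpty_or_nonempty X with hX | hX
  · obtain ⟨h1, h2⟩ := mdim_of_isEmpty (Y := X × X)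
      (fun (g : G) (p : X × X) => (g • p.1, g • p.2)) maxProdDist Fn
    obtain ⟨h3, h4⟩ := mdim_of_isEmpty (Y := X) (fun (g : G) (x : X) => g • x) dist Fn
    rw [h1, h2, h3, h4]
    constructor <;> simp
  · have hT : ∀ g : G, Continuous ((fun (g : G) (x : X) => g • x) g) :=
      fun g => continuous_const_smul g
    have hFne : ∀ n, (Fn n).Nonempty := hFn.1
    have hbounds : ∀ ε : ℝ, 0 < ε →
        (2:EReal) * htopEps (fun (g : G) (x : X) => g • x) dist Fn univ ε ≤
            htopEps (fun (g : G) (p : X × X) => (g • p.1, g • p.2)) maxProdDist Fn univ ε ∧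
          htopEps (fun (g : G) (p : X × X) => (g • p.1, g • p.2)) maxProdDist Fn univ ε ≤
            (2:EReal) * htopEps (fun (g : G) (x : X) => g • x) dist Fn univ (ε/2) :=
      fun ε hε => htop_prod_bounds (fun (g : G) (x : X) => g • x) hT Fn hFne hε
    set u : ℝ → EReal := fun ε => htopEps (fun (g : G) (x : X) => g • x) dist Fn univ ε with hu
    set u2 : ℝ → EReal := fun ε =>
      htopEps (fun (g : G) (p : X × X) => (g • p.1, g • p.2)) maxProdDist Fn univ ε with hu2
    have hu0 : ∀ᶠ δ in 𝓝[>] (0:ℝ), 0 ≤ u δ := by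
      filter_upwards [self_mem_nhdsWithin] with δ (hδ : 0 < δ)
      exact htop_nonneg (fun (g : G) (x : X) => g • x) hT Fn hδ
    have hlognn : ∀ ε : ℝ, ε ∈ Ioo (0:ℝ) 1 → (0:EReal) ≤ ((Real.log (1/ε) : ℝ) : EReal) :=
      fun ε hε => by exact_mod_cast Real.log_nonneg (one_le_one_div hε.1 hε.2.le)
    have hcomp : ∀ ε : ℝ, (fun ε : ℝ => u (ε/2) / ((Real.log (1/ε):ℝ):EReal)) ε
        = (fun δ : ℝ => u δ / ((Real.log (1/(2*δ)):ℝ):EReal)) (ε/2) := by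
      intro ε
      show u (ε/2) / ((Real.log (1/ε):ℝ):EReal) = u (ε/2) / ((Real.log (1/(2*(ε/2))):ℝ):EReal)
      rw [show 2*(ε/2) = ε by ring]
    constructor
    · show limsup (fun ε : ℝ => u2 ε / ((Real.log (1/ε) : ℝ) : EReal)) (𝓝[>] (0:ℝ))
        = 2 * limsup (fun ε : ℝ => u ε / ((Real.log (1/ε) : ℝ) : EReal)) (𝓝[>] (0:ℝ))
      apply le_antisymm
      · calc limsup (fun ε : ℝ => u2 ε / ((Real.log (1/ε):ℝ):EReal)) (𝓝[>] (0:ℝ))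
            ≤ limsup (fun ε : ℝ => (2:EReal) * (u (ε/2) / ((Real.log (1/ε):ℝ):EReal)))
                (𝓝[>] (0:ℝ)) := by
              refine limsup_le_limsup ?_
              filter_upwards [Ioo_mem_nhdsGT (by norm_num : (0:ℝ) < 1)] with ε hε
              calc u2 ε / ((Real.log (1/ε):ℝ):EReal)
                  ≤ ((2:EReal) * u (ε/2)) / ((Real.log (1/ε):ℝ):EReal) :=
                    EReal.div_le_div_right_of_nonneg (hlognn ε hε) (hbounds ε hε.1).2
                _ = (2:EReal) * (u (ε/2) / ((Real.log (1/ε):ℝ):EReal)) :=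
                    (EReal.mul_div _ _ _).symm
          _ = (2:EReal) * limsup (fun ε : ℝ => u (ε/2) / ((Real.log (1/ε):ℝ):EReal))
                (𝓝[>] (0:ℝ)) := ereal_limsup_two_mul _
          _ = (2:EReal) * limsup (fun δ : ℝ => u δ / ((Real.log (1/(2*δ)):ℝ):EReal))
                (𝓝[>] (0:ℝ)) := by
              congr 1
              rw [funext hcomp]
              exact limsup_comp_half (fun δ : ℝ => u δ / ((Real.log (1/(2*δ)):ℝ):EReal))
          _ ≤ (2:EReal) * limsup (fun δ : ℝ => u δ / ((Real.log (1/δ):ℝ):EReal))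
                (𝓝[>] (0:ℝ)) :=
              mul_le_mul_of_nonneg_left (ereal_limsup_shift u hu0) (by norm_num)
      · calc (2:EReal) * limsup (fun ε : ℝ => u ε / ((Real.log (1/ε):ℝ):EReal)) (𝓝[>] (0:ℝ))
            = limsup (fun ε : ℝ => (2:EReal) * (u ε / ((Real.log (1/ε):ℝ):EReal)))
                (𝓝[>] (0:ℝ)) := (ereal_limsup_two_mul _).symm
          _ ≤ limsup (fun ε : ℝ => u2 ε / ((Real.log (1/ε):ℝ):EReal)) (𝓝[>] (0:ℝ)) := by
              refine limsup_le_limsup ?_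
              filter_upwards [Ioo_mem_nhdsGT (by norm_num : (0:ℝ) < 1)] with ε hε
              calc (2:EReal) * (u ε / ((Real.log (1/ε):ℝ):EReal))
                  = ((2:EReal) * u ε) / ((Real.log (1/ε):ℝ):EReal) := EReal.mul_div _ _ _
                _ ≤ u2 ε / ((Real.log (1/ε):ℝ):EReal) :=
                    EReal.div_le_div_right_of_nonneg (hlognn ε hε) (hbounds ε hε.1).1
    · show liminf (fun ε : ℝ => u2 ε / ((Real.log (1/ε) : ℝ) : EReal)) (𝓝[>] (0:ℝ))
        = 2 * liminf (fun ε : ℝ => u ε / ((Real.log (1/ε) : ℝ) : EReal)) (𝓝[>] (0:ℝ))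
      apply le_antisymm
      · calc liminf (fun ε : ℝ => u2 ε / ((Real.log (1/ε):ℝ):EReal)) (𝓝[>] (0:ℝ))
            ≤ liminf (fun ε : ℝ => (2:EReal) * (u (ε/2) / ((Real.log (1/ε):ℝ):EReal)))
                (𝓝[>] (0:ℝ)) := by
              refine liminf_le_liminf ?_
              filter_upwards [Ioo_mem_nhdsGT (by norm_num : (0:ℝ) < 1)] with ε hε
              calc u2 ε / ((Real.log (1/ε):ℝ):EReal)
                  ≤ ((2:EReal) * u (ε/2)) / ((Real.log (1/ε):ℝ):EReal) :=
                    EReal.div_le_div_right_of_nonneg (hlognn ε hε) (hbounds ε hε.1).2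
                _ = (2:EReal) * (u (ε/2) / ((Real.log (1/ε):ℝ):EReal)) :=
                    (EReal.mul_div _ _ _).symm
          _ = (2:EReal) * liminf (fun ε : ℝ => u (ε/2) / ((Real.log (1/ε):ℝ):EReal))
                (𝓝[>] (0:ℝ)) := ereal_liminf_two_mul _
          _ = (2:EReal) * liminf (fun δ : ℝ => u δ / ((Real.log (1/(2*δ)):ℝ):EReal))
                (𝓝[>] (0:ℝ)) := by
              congr 1
              rw [funext hcomp]
              exact liminf_comp_half (fun δ : ℝ => u δ / ((Real.log (1/(2*δ)):ℝ):EReal))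
          _ ≤ (2:EReal) * liminf (fun δ : ℝ => u δ / ((Real.log (1/δ):ℝ):EReal))
                (𝓝[>] (0:ℝ)) :=
              mul_le_mul_of_nonneg_left (ereal_liminf_shift u hu0) (by norm_num)
      · calc (2:EReal) * liminf (fun ε : ℝ => u ε / ((Real.log (1/ε):ℝ):EReal)) (𝓝[>] (0:ℝ))
            = liminf (fun ε : ℝ => (2:EReal) * (u ε / ((Real.log (1/ε):ℝ):EReal)))
                (𝓝[>] (0:ℝ)) := (ereal_liminf_two_mul _).symm
          _ ≤ liminf (fun ε : ℝ => u2 ε / ((Real.log (1/ε):ℝ):EReal)) (𝓝[>] (0:ℝ)) := by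
              refine liminf_le_liminf ?_
              filter_upwards [Ioo_mem_nhdsGT (by norm_num : (0:ℝ) < 1)] with ε hε
              calc (2:EReal) * (u ε / ((Real.log (1/ε):ℝ):EReal))
                  = ((2:EReal) * u ε) / ((Real.log (1/ε):ℝ):EReal) := EReal.mul_div _ _ _
                _ ≤ u2 ε / ((Real.log (1/ε):ℝ):EReal) :=
                    EReal.div_le_div_right_of_nonneg (hlognn ε hε) (hbounds ε hε.1).1
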